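/- Assume the strong dissipativity condition (H7): there exists γ₂ > 0 such that 2⟨y₁ − y₂, g(x,y₁) − g(x,y₂)⟩ + |h(x,y₁) − h(x,y₂)|² ≤ −γ₂|y₁ − y₂|² for all x, y₁, y₂, together with (H6)₂. Then solutions of the frozen SDE from different initial conditions contract exponentially in L²: E[|Y^{x,y₁}_t − Y^{x,y₂}_t|²] ≤ e^{−γ₂ t}|y₁ − y₂|² for all t ≥ 0, x ∈ ℝ^m, y₁, y₂ ∈ ℝⁿ. -/

import Mathlib

open MeasureTheory Filter

/-- A process is a local martingale if there is a localizing sequence of stopping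
times tending to infinity such that each stopped process is a martingale. -/
def IsLocalMartingale {Ω : Type*} {m : MeasurableSpace Ω}
    (F : Filtration ℝ m) (ℙ : Measure Ω) (M : ℝ → Ω → ℝ) : Prop :=
  ∃ τ : ℕ → Ω → ℝ, (∀ k, IsStoppingTime F (fun ω => (τ k ω : WithTop ℝ)))
    ∧ (∀ ω, Tendsto (fun k => τ k ω) atTop atTop)
    ∧ ∀ k, Martingale (stoppedProcess M (fun ω => (τ k ω : WithTop ℝ))) F ℙ

/-- The generator of the pair `(Y^{x,y₁}, Y^{x,y₂})` of two solutions of the frozen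
SDE `dY = g(x,Y)dt + h(x,Y)dw` driven by the *same* Brownian motion `w`:
`L φ(u,v) = Dφ(u,v)[(g(x,u), g(x,v))]
  + ½ Σ_k D²φ(u,v)[(h_k(x,u), h_k(x,v)), (h_k(x,u), h_k(x,v))]`,
where `h_k` denotes the `k`-th column of `h`. -/
noncomputable def frozenPairGenerator (m n e : ℕ)
    (g : (Fin m → ℝ) → (Fin n → ℝ) → (Fin n → ℝ))
    (h : (Fin m → ℝ) → (Fin n → ℝ) → (Fin n → Fin e → ℝ))
    (x : Fin m → ℝ) (φ : ((Fin n → ℝ) × (Fin n → ℝ)) → ℝ)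
    (p : (Fin n → ℝ) × (Fin n → ℝ)) : ℝ :=
  fderiv ℝ φ p (g x p.1, g x p.2)
    + (1/2) * ∑ k : Fin e,
        fderiv ℝ (fun z => fderiv ℝ φ z ((fun i => h x p.1 i k), (fun i => h x p.2 i k)))
          p ((fun i => h x p.1 i k), (fun i => h x p.2 i k))

/-! For `φ(u, v) = |u - v|²` the generator of the pair `P = (Y^{x,y₁}, Y^{x,y₂})` is
`Lφ(u, v) = 2⟨u - v, g(x,u) - g(x,v)⟩ + |h(x,u) - h(x,v)|²`, which (H7) bounds by `-γ₂ φ`.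
Along a localizing sequence `τ_k` the compensated process `φ(P_r) - ∫₀ʳ Lφ(P_v) dv`, stopped at
`τ_k`, is a true martingale; comparing its values at `s` and `u` on `{s ≤ τ_k}` and letting
`k → ∞` with Fatou's lemma gives `E φ(P_u) + γ₂ ∫ₛᵘ E φ(P_v) dv ≤ E φ(P_s)` for `0 ≤ s ≤ u`.
Hence `E φ(P_·)` is antitone and `E φ(P_u) (1 + γ₂ (u - s)) ≤ E φ(P_s)`; iterating over `N` equal
steps of `[0, t]` and letting `N → ∞` turns `(1 + γ₂ t / N)^N` into `exp (γ₂ t)`.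
-/

open Set
open scoped ENNReal

section Gronwall

variable {F : ℝ → ℝ≥0∞} {γ : ℝ}

theorem antitoneOn_of_add_mul_setLIntegral_le
    (hF : ∀ s u, 0 ≤ s → s ≤ u → F u + ENNReal.ofReal γ * ∫⁻ v in Ioc s u, F v ≤ F s) :
    AntitoneOn F (Ici 0) :=
  fun s hs _ _ hsu => le_self_add.trans (hF s _ hs hsu)

theorem mul_ofReal_one_add_le_of_add_mul_setLIntegral_le (hγ : 0 ≤ γ)
    (hF : ∀ s u, 0 ≤ s → s ≤ u → F u + ENNReal.ofReal γ * ∫⁻ v in Ioc s u, F v ≤ F s)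
    {s u : ℝ} (hs : 0 ≤ s) (hsu : s ≤ u) :
    F u * ENNReal.ofReal (1 + γ * (u - s)) ≤ F s := by
  have hmean : F u * ENNReal.ofReal (u - s) ≤ ∫⁻ v in Ioc s u, F v :=
    calc F u * ENNReal.ofReal (u - s) = ∫⁻ _ in Ioc s u, F u := by
          rw [setLIntegral_const, Real.volume_Ioc]
      _ ≤ ∫⁻ v in Ioc s u, F v := setLIntegral_mono' measurableSet_Ioc fun v hv =>
          antitoneOn_of_add_mul_setLIntegral_le hF (mem_Ici.2 (hs.trans hv.1.le))
            (mem_Ici.2 (hs.trans hsu)) hv.2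
  calc F u * ENNReal.ofReal (1 + γ * (u - s))
      = F u + ENNReal.ofReal γ * (F u * ENNReal.ofReal (u - s)) := by
        rw [ENNReal.ofReal_add zero_le_one (mul_nonneg hγ (sub_nonneg.2 hsu)),
          ENNReal.ofReal_mul hγ, ENNReal.ofReal_one]
        ring
    _ ≤ F u + ENNReal.ofReal γ * ∫⁻ v in Ioc s u, F v := by gcongr
    _ ≤ F s := hF s u hs hsu

theorem mul_ofReal_one_add_pow_le_of_add_mul_setLIntegral_le (hγ : 0 ≤ γ)
    (hF : ∀ s u, 0 ≤ s → s ≤ u → F u + ENNReal.ofReal γ * ∫⁻ v in Ioc s u, F v ≤ F s)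
    {d : ℝ} (hd : 0 ≤ d) (N : ℕ) :
    F (N * d) * ENNReal.ofReal ((1 + γ * d) ^ N) ≤ F 0 := by
  induction N with
  | zero => simp
  | succ N ih =>
    have hstep := mul_ofReal_one_add_le_of_add_mul_setLIntegral_le hγ hF
      (by positivity : 0 ≤ (N : ℝ) * d)
      (by push_cast; nlinarith : (N : ℝ) * d ≤ (N + 1 : ℕ) * d)
    have hbase : 0 ≤ 1 + γ * d := by positivity
    rw [show ((N + 1 : ℕ) : ℝ) * d - N * d = d by push_cast; ring] at hstep
    calc F ((N + 1 : ℕ) * d) * ENNReal.ofReal ((1 + γ * d) ^ (N + 1))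
        = F ((N + 1 : ℕ) * d) * ENNReal.ofReal (1 + γ * d)
            * ENNReal.ofReal ((1 + γ * d) ^ N) := by
          rw [pow_succ', ENNReal.ofReal_mul hbase, mul_assoc]
      _ ≤ F (N * d) * ENNReal.ofReal ((1 + γ * d) ^ N) := by gcongr
      _ ≤ F 0 := ih

theorem le_ofReal_exp_mul_of_add_mul_setLIntegral_le (hγ : 0 ≤ γ)
    (hF : ∀ s u, 0 ≤ s → s ≤ u → F u + ENNReal.ofReal γ * ∫⁻ v in Ioc s u, F v ≤ F s)
    {t : ℝ} (ht : 0 ≤ t) :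
    F t ≤ ENNReal.ofReal (Real.exp (-(γ * t))) * F 0 := by
  have hN : ∀ N : ℕ, F t * ENNReal.ofReal ((1 + γ * t / N) ^ N) ≤ F 0 := by
    intro N
    rcases N.eq_zero_or_pos with rfl | hN
    · simpa using antitoneOn_of_add_mul_setLIntegral_le hF (mem_Ici.2 le_rfl) (mem_Ici.2 ht) ht
    have h := mul_ofReal_one_add_pow_le_of_add_mul_setLIntegral_le hγ hF
      (div_nonneg ht (Nat.cast_nonneg N)) N
    rwa [mul_div_cancel₀ t (by positivity), ← mul_div_assoc] at h
  have hlim : F t * ENNReal.ofReal (Real.exp (γ * t)) ≤ F 0 :=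
    le_of_tendsto' (ENNReal.Tendsto.const_mul
      ((ENNReal.continuous_ofReal.tendsto _).comp (Real.tendsto_one_add_div_pow_exp (γ * t)))
      (Or.inl (ENNReal.ofReal_pos.2 (Real.exp_pos _)).ne')) hN
  calc F t
      = F t * ENNReal.ofReal (Real.exp (γ * t)) * ENNReal.ofReal (Real.exp (-(γ * t))) := by
        rw [mul_assoc, ← ENNReal.ofReal_mul (Real.exp_pos _).le, ← Real.exp_add, add_neg_cancel,
          Real.exp_zero, ENNReal.ofReal_one, mul_one]
    _ ≤ ENNReal.ofReal (Real.exp (-(γ * t))) * F 0 := by rw [mul_comm]; gcongr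

end Gronwall

section ContinuousPaths

variable {Ω : Type*} [MeasurableSpace Ω] {A : ℝ → Ω → ℝ}

theorem stronglyMeasurable_intervalIntegral_of_continuous (hAcont : ∀ ω, Continuous (A · ω))
    (hAmeas : ∀ r, StronglyMeasurable (A r)) (a b : ℝ) :
    StronglyMeasurable fun ω => ∫ v in a..b, A v ω := by
  have hjoint : StronglyMeasurable (Function.uncurry fun ω v => A v ω) :=
    (stronglyMeasurable_uncurry_of_continuous_of_stronglyMeasurable hAcont hAmeas).comp_measurable
      measurable_swap
  exact (hjoint.integral_prod_right (ν := volume.restrict (Ioc a b))).sub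
    (hjoint.integral_prod_right (ν := volume.restrict (Ioc b a)))

theorem lintegral_ofReal_intervalIntegral (μ : Measure Ω) [SFinite μ] (hA : ∀ r ω, 0 ≤ A r ω)
    (hAcont : ∀ ω, Continuous (A · ω)) (hAmeas : ∀ r, StronglyMeasurable (A r))
    {a b : ℝ} (hab : a ≤ b) :
    ∫⁻ ω, ENNReal.ofReal (∫ v in a..b, A v ω) ∂μ
      = ∫⁻ v in Ioc a b, ∫⁻ ω, ENNReal.ofReal (A v ω) ∂μ := by
  have hpath : ∀ ω, ENNReal.ofReal (∫ v in a..b, A v ω)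
      = ∫⁻ v in Ioc a b, ENNReal.ofReal (A v ω) := fun ω => by
    rw [intervalIntegral.integral_of_le hab]
    exact ofReal_integral_eq_lintegral_ofReal (hAcont ω).integrableOn_Ioc
      (ae_of_all _ fun v => hA v ω)
  rw [lintegral_congr hpath]
  exact lintegral_lintegral_swap
    ((stronglyMeasurable_uncurry_of_continuous_of_stronglyMeasurable hAcont hAmeas).measurable.comp
      measurable_swap).ennreal_ofReal.aemeasurable

end ContinuousPaths

section Localization

variable {Ω : Type*} {mΩ : MeasurableSpace Ω}

theorem stoppedProcess_coe_apply {β : Type*} (X : ℝ → Ω → β) (τ : Ω → ℝ) (r : ℝ) (ω : Ω) :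
    stoppedProcess X (fun ω => (τ ω : WithTop ℝ)) r ω = X (min r (τ ω)) ω := by
  rw [stoppedProcess, ← WithTop.coe_min, WithTop.untopA_eq_untop WithTop.coe_ne_top,
    WithTop.untop_coe]

theorem MeasureTheory.IsStoppingTime.measurableSet_le_coe {F : Filtration ℝ mΩ} {τ : Ω → ℝ}
    (hτ : IsStoppingTime F fun ω => (τ ω : WithTop ℝ)) (r : ℝ) :
    MeasurableSet[F r] {ω | r ≤ τ ω} := by
  simpa using hτ.measurableSet_ge r

theorem lintegral_le_of_lintegral_indicator_le {μ : Measure Ω} {f : Ω → ℝ≥0∞} (hf : Measurable f)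
    {E : ℕ → Set Ω} (hE : ∀ k, MeasurableSet (E k)) (hE_eventually : ∀ ω, ∀ᶠ k in atTop, ω ∈ E k)
    {c : ℝ≥0∞} (h : ∀ k, ∫⁻ ω, (E k).indicator f ω ∂μ ≤ c) :
    ∫⁻ ω, f ω ∂μ ≤ c :=
  calc ∫⁻ ω, f ω ∂μ = ∫⁻ ω, liminf (fun k => (E k).indicator f ω) atTop ∂μ := by
        congr 1 with ω
        rw [liminf_congr ((hE_eventually ω).mono fun k hk => indicator_of_mem hk f), liminf_const]
    _ ≤ liminf (fun k => ∫⁻ ω, (E k).indicator f ω ∂μ) atTop :=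
        lintegral_liminf_le fun k => hf.indicator (hE k)
    _ ≤ c := liminf_le_of_le (by isBoundedDefault) fun b hb =>
        hb.exists.elim fun k hk => hk.trans (h k)

theorem lintegral_le_of_add_indicator_martingale_le {ι : Type*} [Preorder ι]
    {μ : Measure Ω} {F : Filtration ι mΩ} [SigmaFiniteFiltration μ F] {W : ι → Ω → ℝ}
    (hW : Martingale W F μ) {s u : ι} (hsu : s ≤ u)
    {S : Set Ω} (hS : MeasurableSet[F s] S) (hWs : ∀ ω ∈ S, 0 ≤ W s ω)
    (hWu : ∀ ω ∈ S, 0 ≤ W u ω) {f g : Ω → ℝ≥0∞}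
    (hfg : ∀ ω, f ω + S.indicator (fun ω => ENNReal.ofReal (W s ω)) ω
      ≤ g ω + S.indicator (fun ω => ENNReal.ofReal (W u ω)) ω) :
    ∫⁻ ω, f ω ∂μ ≤ ∫⁻ ω, g ω ∂μ := by
  have hS' : MeasurableSet S := F.le s _ hS
  have hW_lintegral : ∀ r, (∀ ω ∈ S, 0 ≤ W r ω) →
      ∫⁻ ω, S.indicator (fun ω => ENNReal.ofReal (W r ω)) ω ∂μ
        = ENNReal.ofReal (∫ ω in S, W r ω ∂μ) := fun r hr => by
    rw [lintegral_indicator hS', ofReal_integral_eq_lintegral_ofReal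
      (hW.integrable r).integrableOn ((ae_restrict_iff' hS').2 (ae_of_all _ hr))]
  have hW_meas : ∀ r, Measurable (S.indicator fun ω => ENNReal.ofReal (W r ω)) := fun r =>
    (((hW.stronglyAdapted r).mono (F.le r)).measurable.ennreal_ofReal).indicator hS'
  refine ENNReal.le_of_add_le_add_right (a := ENNReal.ofReal (∫ ω in S, W s ω ∂μ))
    ENNReal.ofReal_ne_top ?_
  calc _ = ∫⁻ ω, (f ω + S.indicator (fun ω => ENNReal.ofReal (W s ω)) ω) ∂μ := by
        rw [lintegral_add_right _ (hW_meas s), hW_lintegral s hWs]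
    _ ≤ ∫⁻ ω, (g ω + S.indicator (fun ω => ENNReal.ofReal (W u ω)) ω) ∂μ := lintegral_mono hfg
    _ = _ := by
        rw [lintegral_add_right _ (hW_meas u), hW_lintegral u hWu, hW.setIntegral_eq hsu hS]

end Localization

section Path

variable {a b : ℝ → ℝ} {γ : ℝ}

theorem sub_intervalIntegral_nonneg_of_le_neg_mul (ha : ∀ r, 0 ≤ a r) (hγ : 0 ≤ γ)
    (hb_le : ∀ r, b r ≤ -γ * a r) (hb_cont : Continuous b) {θ : ℝ} (hθ : 0 ≤ θ) :
    0 ≤ a θ - ∫ v in (0:ℝ)..θ, b v := by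
  have hb_nonpos : ∀ v, b v ≤ 0 := fun v =>
    (hb_le v).trans (mul_nonpos_of_nonpos_of_nonneg (neg_nonpos.2 hγ) (ha v))
  have hint : ∫ v in (0:ℝ)..θ, b v ≤ 0 := by
    simpa using intervalIntegral.integral_mono_on hθ (hb_cont.intervalIntegrable _ _)
      intervalIntegrable_const fun v _ => hb_nonpos v
  linarith [ha θ]

theorem intervalIntegral_sub_le_neg_mul_of_le_neg_mul (hb_le : ∀ r, b r ≤ -γ * a r)
    (ha_cont : Continuous a) (hb_cont : Continuous b) {s θ : ℝ} (hsθ : s ≤ θ) :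
    (∫ v in (0:ℝ)..θ, b v) - ∫ v in (0:ℝ)..s, b v ≤ -γ * ∫ v in s..θ, a v := by
  rw [intervalIntegral.integral_interval_sub_left (hb_cont.intervalIntegrable _ _)
    (hb_cont.intervalIntegrable _ _), ← intervalIntegral.integral_const_mul]
  exact intervalIntegral.integral_mono_on hsθ (hb_cont.intervalIntegrable _ _)
    ((continuous_const.mul ha_cont).intervalIntegrable _ _) fun v _ => hb_le v

/-- `T` plays the role of the stopping time and `a r - ∫₀ʳ b` that of the compensated process
stopped at `T`. -/
theorem ite_ofReal_add_ofReal_sub_le (ha : ∀ r, 0 ≤ a r) (hγ : 0 ≤ γ)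
    (hb_le : ∀ r, b r ≤ -γ * a r) (ha_cont : Continuous a) (hb_cont : Continuous b)
    {s u T : ℝ} (hs : 0 ≤ s) (hsu : s ≤ u) (hsT : s ≤ T) :
    (if u ≤ T then ENNReal.ofReal (a u + γ * ∫ v in s..u, a v) else 0)
        + ENNReal.ofReal (a s - ∫ v in (0:ℝ)..s, b v)
      ≤ ENNReal.ofReal (a s) + ENNReal.ofReal (a (min u T) - ∫ v in (0:ℝ)..min u T, b v) := by
  set θ := min u T
  have hsθ : s ≤ θ := le_min hsu hsT
  have hθ_nonneg : 0 ≤ a θ + γ * ∫ v in s..θ, a v :=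
    add_nonneg (ha θ) (mul_nonneg hγ (intervalIntegral.integral_nonneg hsθ fun v _ => ha v))
  have hite_le : (if u ≤ T then ENNReal.ofReal (a u + γ * ∫ v in s..u, a v) else 0)
      ≤ ENNReal.ofReal (a θ + γ * ∫ v in s..θ, a v) := by
    split_ifs with huT
    · rw [show θ = u from min_eq_left huT]
    · exact zero_le
  have hreal := intervalIntegral_sub_le_neg_mul_of_le_neg_mul hb_le ha_cont hb_cont hsθ
  calc _ ≤ ENNReal.ofReal (a θ + γ * ∫ v in s..θ, a v)
          + ENNReal.ofReal (a s - ∫ v in (0:ℝ)..s, b v) := by gcongr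
    _ = ENNReal.ofReal (a θ + γ * (∫ v in s..θ, a v) + (a s - ∫ v in (0:ℝ)..s, b v)) :=
        (ENNReal.ofReal_add hθ_nonneg
          (sub_intervalIntegral_nonneg_of_le_neg_mul ha hγ hb_le hb_cont hs)).symm
    _ ≤ ENNReal.ofReal (a s + (a θ - ∫ v in (0:ℝ)..θ, b v)) :=
        ENNReal.ofReal_le_ofReal (by linarith)
    _ ≤ _ := ENNReal.ofReal_add_le

end Path

section Lyapunov

variable {Ω : Type*} {mΩ : MeasurableSpace Ω} {ℙ : Measure Ω} {F : Filtration ℝ mΩ}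
  {A B : ℝ → Ω → ℝ} {γ a₀ : ℝ}

theorem lintegral_indicator_le_of_martingale_stoppedProcess [IsFiniteMeasure ℙ] (hγ : 0 ≤ γ)
    (hA : ∀ r ω, 0 ≤ A r ω) (hB_le : ∀ r ω, B r ω ≤ -γ * A r ω)
    (hAcont : ∀ ω, Continuous (A · ω)) (hBcont : ∀ ω, Continuous (B · ω))
    {τ : Ω → ℝ} (hτ : IsStoppingTime F fun ω => (τ ω : WithTop ℝ))
    (hM : Martingale (stoppedProcess (fun r ω => A r ω - a₀ - ∫ v in (0:ℝ)..r, B v ω)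
      fun ω => (τ ω : WithTop ℝ)) F ℙ)
    {s u : ℝ} (hs : 0 ≤ s) (hsu : s ≤ u) :
    ∫⁻ ω, {ω | u ≤ τ ω}.indicator
        (fun ω => ENNReal.ofReal (A u ω + γ * ∫ v in s..u, A v ω)) ω ∂ℙ
      ≤ ∫⁻ ω, ENNReal.ofReal (A s ω) ∂ℙ := by
  set W := stoppedProcess (fun r ω => A r ω - a₀ - ∫ v in (0:ℝ)..r, B v ω)
    (fun ω => (τ ω : WithTop ℝ)) + fun _ _ => a₀
  have hW_apply : ∀ r ω, W r ω = A (min r (τ ω)) ω - ∫ v in (0:ℝ)..min r (τ ω), B v ω := by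
    intro r ω
    simp only [W, Pi.add_apply, stoppedProcess_coe_apply]
    ring
  have hW_nonneg : ∀ r, s ≤ r → ∀ ω ∈ {ω | s ≤ τ ω}, 0 ≤ W r ω := fun r hsr ω hω => by
    rw [hW_apply]
    exact sub_intervalIntegral_nonneg_of_le_neg_mul (hA · ω) hγ (hB_le · ω) (hBcont ω)
      (hs.trans (le_min hsr hω))
  have hW : Martingale W F ℙ := hM.add (martingale_const F ℙ a₀)
  refine lintegral_le_of_add_indicator_martingale_le hW hsu
    (hτ.measurableSet_le_coe s) (hW_nonneg s le_rfl) (hW_nonneg u hsu) fun ω => ?_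
  by_cases hω : s ≤ τ ω
  · have hpath := ite_ofReal_add_ofReal_sub_le (hA · ω) hγ (hB_le · ω) (hAcont ω) (hBcont ω)
      hs hsu hω
    simpa only [indicator_apply, mem_ofPred_eq, hω, if_true, hW_apply, min_eq_left hω]
      using hpath
  · have hωu : ¬ u ≤ τ ω := fun h => hω (hsu.trans h)
    simp [hω, hωu]

theorem lintegral_add_mul_setLIntegral_le_of_isLocalMartingale [IsFiniteMeasure ℙ] (hγ : 0 ≤ γ)
    (hA : ∀ r ω, 0 ≤ A r ω) (hB_le : ∀ r ω, B r ω ≤ -γ * A r ω)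
    (hAcont : ∀ ω, Continuous (A · ω)) (hAmeas : ∀ r, StronglyMeasurable (A r))
    (hBcont : ∀ ω, Continuous (B · ω))
    (hloc : IsLocalMartingale F ℙ fun r ω => A r ω - a₀ - ∫ v in (0:ℝ)..r, B v ω)
    {s u : ℝ} (hs : 0 ≤ s) (hsu : s ≤ u) :
    ∫⁻ ω, ENNReal.ofReal (A u ω) ∂ℙ
        + ENNReal.ofReal γ * ∫⁻ v in Ioc s u, ∫⁻ ω, ENNReal.ofReal (A v ω) ∂ℙ
      ≤ ∫⁻ ω, ENNReal.ofReal (A s ω) ∂ℙ := by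
  obtain ⟨τ, hτ, hτ_tendsto, hM⟩ := hloc
  have hI_meas := (stronglyMeasurable_intervalIntegral_of_continuous hAcont hAmeas s u).measurable
  have hsplit : ∀ ω, ENNReal.ofReal (A u ω + γ * ∫ v in s..u, A v ω)
      = ENNReal.ofReal (A u ω) + ENNReal.ofReal γ * ENNReal.ofReal (∫ v in s..u, A v ω) :=
    fun ω => by
      rw [ENNReal.ofReal_add (hA u ω)
        (mul_nonneg hγ (intervalIntegral.integral_nonneg hsu fun v _ => hA v ω)),
        ENNReal.ofReal_mul hγ]
  calc _ = ∫⁻ ω, ENNReal.ofReal (A u ω + γ * ∫ v in s..u, A v ω) ∂ℙ := by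
        rw [← lintegral_ofReal_intervalIntegral ℙ hA hAcont hAmeas hsu,
          ← lintegral_const_mul _ hI_meas.ennreal_ofReal,
          ← lintegral_add_left (hAmeas u).measurable.ennreal_ofReal, lintegral_congr hsplit]
    _ ≤ _ := lintegral_le_of_lintegral_indicator_le
        ((hAmeas u).measurable.add (measurable_const.mul hI_meas)).ennreal_ofReal
        (fun k => F.le u _ ((hτ k).measurableSet_le_coe u))
        (fun ω => (hτ_tendsto ω).eventually_ge_atTop u)
        fun k => lintegral_indicator_le_of_martingale_stoppedProcess hγ hA hB_le hAcont hBcont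
          (hτ k) (hM k) hs hsu

theorem integral_le_exp_mul_of_isLocalMartingale [IsProbabilityMeasure ℙ] (hγ : 0 ≤ γ)
    (hA : ∀ r ω, 0 ≤ A r ω) (hB_le : ∀ r ω, B r ω ≤ -γ * A r ω)
    (hAcont : ∀ ω, Continuous (A · ω)) (hAmeas : ∀ r, StronglyMeasurable (A r))
    (hBcont : ∀ ω, Continuous (B · ω)) (hA0 : ∀ ω, A 0 ω = a₀)
    (hloc : IsLocalMartingale F ℙ fun r ω => A r ω - a₀ - ∫ v in (0:ℝ)..r, B v ω)
    {t : ℝ} (ht : 0 ≤ t) :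
    ∫ ω, A t ω ∂ℙ ≤ Real.exp (-(γ * t)) * a₀ := by
  have hF := le_ofReal_exp_mul_of_add_mul_setLIntegral_le hγ
    (F := fun r => ∫⁻ ω, ENNReal.ofReal (A r ω) ∂ℙ)
    (fun s u hs hsu => lintegral_add_mul_setLIntegral_le_of_isLocalMartingale hγ hA hB_le hAcont
      hAmeas hBcont hloc hs hsu) ht
  have ha₀ : 0 ≤ a₀ := by
    obtain ⟨ω⟩ := nonempty_of_isProbabilityMeasure ℙ
    exact hA0 ω ▸ hA 0 ω
  simp only [hA0, lintegral_const, measure_univ, mul_one] at hF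
  rw [← ENNReal.ofReal_mul (Real.exp_pos _).le] at hF
  rw [integral_eq_lintegral_of_nonneg_ae (ae_of_all _ (hA t)) (hAmeas t).aestronglyMeasurable]
  exact ENNReal.toReal_le_of_le_ofReal (by positivity) hF

end Lyapunov

section PairSqDist

variable {n : ℕ}

noncomputable def pairDiffCoord (n : ℕ) (i : Fin n) : ((Fin n → ℝ) × (Fin n → ℝ)) →L[ℝ] ℝ :=
  (ContinuousLinearMap.proj i).comp
    (ContinuousLinearMap.fst ℝ (Fin n → ℝ) (Fin n → ℝ)
      - ContinuousLinearMap.snd ℝ (Fin n → ℝ) (Fin n → ℝ))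

@[simp] theorem pairDiffCoord_apply (i : Fin n) (p : (Fin n → ℝ) × (Fin n → ℝ)) :
    pairDiffCoord n i p = p.1 i - p.2 i := rfl

def pairSqDist (n : ℕ) (p : (Fin n → ℝ) × (Fin n → ℝ)) : ℝ := ∑ i, (p.1 i - p.2 i) ^ 2

theorem pairSqDist_nonneg (p : (Fin n → ℝ) × (Fin n → ℝ)) : 0 ≤ pairSqDist n p :=
  Finset.sum_nonneg fun _ _ => sq_nonneg _

theorem pairSqDist_eq_sum_pairDiffCoord_sq :
    pairSqDist n = fun p => ∑ i, pairDiffCoord n i p ^ 2 := rfl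

theorem contDiff_pairSqDist : ContDiff ℝ 2 (pairSqDist n) := by
  rw [pairSqDist_eq_sum_pairDiffCoord_sq]
  exact ContDiff.sum fun i _ => (pairDiffCoord n i).contDiff.pow 2

theorem hasFDerivAt_pairSqDist (p : (Fin n → ℝ) × (Fin n → ℝ)) :
    HasFDerivAt (pairSqDist n) (∑ i, (2 * (p.1 i - p.2 i)) • pairDiffCoord n i) p := by
  rw [pairSqDist_eq_sum_pairDiffCoord_sq]
  refine HasFDerivAt.fun_sum fun i _ => ?_
  simpa [mul_comm] using (pairDiffCoord n i).hasFDerivAt.pow 2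

theorem fderiv_pairSqDist_apply (p w : (Fin n → ℝ) × (Fin n → ℝ)) :
    fderiv ℝ (pairSqDist n) p w = ∑ i, 2 * (p.1 i - p.2 i) * (w.1 i - w.2 i) := by
  simp [(hasFDerivAt_pairSqDist p).fderiv]

theorem fderiv_fderiv_pairSqDist_apply (p w : (Fin n → ℝ) × (Fin n → ℝ)) :
    fderiv ℝ (fun z => fderiv ℝ (pairSqDist n) z w) p w = ∑ i, 2 * (w.1 i - w.2 i) ^ 2 := by
  have hlin : (fun z => fderiv ℝ (pairSqDist n) z w)
      = ⇑(∑ i, (2 * (w.1 i - w.2 i)) • pairDiffCoord n i) := by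
    ext z
    simp [fderiv_pairSqDist_apply, mul_comm, mul_left_comm, mul_assoc]
  simp [hlin, ContinuousLinearMap.fderiv, sq, mul_assoc]

theorem frozenPairGenerator_pairSqDist {m e : ℕ}
    (g : (Fin m → ℝ) → (Fin n → ℝ) → (Fin n → ℝ))
    (h : (Fin m → ℝ) → (Fin n → ℝ) → (Fin n → Fin e → ℝ))
    (x : Fin m → ℝ) (p : (Fin n → ℝ) × (Fin n → ℝ)) :
    frozenPairGenerator m n e g h x (pairSqDist n) p
      = 2 * (∑ i, (p.1 i - p.2 i) * (g x p.1 i - g x p.2 i))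
        + ∑ i, ∑ k, (h x p.1 i k - h x p.2 i k) ^ 2 := by
  simp only [frozenPairGenerator, fderiv_fderiv_pairSqDist_apply]
  rw [fderiv_pairSqDist_apply, Finset.sum_comm (γ := Fin e), Finset.mul_sum, Finset.mul_sum]
  congr 1
  · exact Finset.sum_congr rfl fun i _ => by ring
  · refine Finset.sum_congr rfl fun i _ => ?_
    rw [Finset.mul_sum]
    exact Finset.sum_congr rfl fun k _ => by ring

end PairSqDist

theorem frozen_sde_contraction_general
    {Ω : Type*} {mΩ : MeasurableSpace Ω} (ℙ : Measure Ω) [IsProbabilityMeasure ℙ]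
    (F : Filtration ℝ mΩ) (m n e : ℕ) (γ₂ : ℝ)
    (hγ₂ : 0 < γ₂)
    (g : (Fin m → ℝ) → (Fin n → ℝ) → (Fin n → ℝ))
    (h : (Fin m → ℝ) → (Fin n → ℝ) → (Fin n → Fin e → ℝ))
    (hg : LocallyLipschitz fun p : (Fin m → ℝ) × (Fin n → ℝ) => g p.1 p.2)
    (hh : ∃ K : NNReal, LipschitzWith K fun p : (Fin m → ℝ) × (Fin n → ℝ) => h p.1 p.2)
    -- the strong dissipativity condition `(H7)`
    (hstrong : ∀ (x : Fin m → ℝ) (y₁ y₂ : Fin n → ℝ),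
      2 * (∑ i, (y₁ i - y₂ i) * (g x y₁ i - g x y₂ i))
          + (∑ i, ∑ k, (h x y₁ i k - h x y₂ i k) ^ 2)
        ≤ -γ₂ * (∑ i, (y₁ i - y₂ i) ^ 2))
    -- solutions of the frozen SDE, driven by the same Brownian motion:
    -- the pair process solves the associated (degenerate) martingale problem
    (Y : (Fin m → ℝ) → (Fin n → ℝ) → ℝ → Ω → (Fin n → ℝ))
    (hY0 : ∀ x y ω, Y x y 0 ω = y)
    (hYcont : ∀ x y ω, Continuous fun t => Y x y t ω)
    (hYadapted : ∀ x y, Adapted F (Y x y))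
    (hpair : ∀ (x : Fin m → ℝ) (y₁ y₂ : Fin n → ℝ)
        (φ : ((Fin n → ℝ) × (Fin n → ℝ)) → ℝ), ContDiff ℝ 2 φ →
      IsLocalMartingale F ℙ (fun t ω =>
        φ (Y x y₁ t ω, Y x y₂ t ω) - φ (y₁, y₂)
          - ∫ s in (0:ℝ)..t,
              frozenPairGenerator m n e g h x φ (Y x y₁ s ω, Y x y₂ s ω))) :
    ∀ (t : ℝ), 0 ≤ t → ∀ (x : Fin m → ℝ) (y₁ y₂ : Fin n → ℝ),
      (∫ ω, (∑ i, (Y x y₁ t ω i - Y x y₂ t ω i) ^ 2) ∂ℙ)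
        ≤ Real.exp (-(γ₂ * t)) * (∑ i, (y₁ i - y₂ i) ^ 2) := by
  intro t ht x y₁ y₂
  obtain ⟨K, hK⟩ := hh
  have hgx : Continuous (g x) := hg.continuous.comp (Continuous.prodMk_right x)
  have hhx : Continuous (h x) := hK.continuous.comp (Continuous.prodMk_right x)
  have hL : Continuous (frozenPairGenerator m n e g h x (pairSqDist n)) := by
    simp only [funext (frozenPairGenerator_pairSqDist g h x)]
    fun_prop
  have hYmeas : ∀ y r, StronglyMeasurable (Y x y r) := fun y r =>
    ((hYadapted x y r).mono (F.le r) le_rfl).stronglyMeasurable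
  exact integral_le_exp_mul_of_isLocalMartingale hγ₂.le (fun _ _ => pairSqDist_nonneg _)
    (fun _ _ => (frozenPairGenerator_pairSqDist g h x _).trans_le (hstrong x _ _))
    (fun ω => contDiff_pairSqDist.continuous.comp ((hYcont x y₁ ω).prodMk (hYcont x y₂ ω)))
    (fun r => contDiff_pairSqDist.continuous.comp_stronglyMeasurable
      ((hYmeas y₁ r).prodMk (hYmeas y₂ r)))
    (fun ω => hL.comp ((hYcont x y₁ ω).prodMk (hYcont x y₂ ω)))
    (fun ω => by simp only [hY0])
    (hpair x y₁ y₂ _ contDiff_pairSqDist) ht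

/-- Exponential `L²`-contraction of the frozen SDE under the strong dissipativity
condition `(H7)`, together with `(H6)₂`: for two solutions from initial
conditions `y₁, y₂` driven by the same Brownian motion (encoded via the
martingale problem for the pair process),
`E[|Y^{x,y₁}_t − Y^{x,y₂}_t|²] ≤ e^{−γ₂ t}|y₁ − y₂|²` for all `t ≥ 0`. -/
theorem frozen_sde_contraction
    {Ω : Type*} {mΩ : MeasurableSpace Ω} (ℙ : Measure Ω) [IsProbabilityMeasure ℙ]
    (F : Filtration ℝ mΩ) (m n e : ℕ) (γ₁ γ₂ C η₃ : ℝ)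
    (hγ₁ : 0 < γ₁) (hγ₂ : 0 < γ₂) (hC : 0 < C) (hη₃ : 0 ≤ η₃)
    (g : (Fin m → ℝ) → (Fin n → ℝ) → (Fin n → ℝ))
    (h : (Fin m → ℝ) → (Fin n → ℝ) → (Fin n → Fin e → ℝ))
    (hg : LocallyLipschitz fun p : (Fin m → ℝ) × (Fin n → ℝ) => g p.1 p.2)
    (hh : ∃ K : NNReal, LipschitzWith K fun p : (Fin m → ℝ) × (Fin n → ℝ) => h p.1 p.2)
    -- the dissipativity condition `(H6)₂`
    (hdiss : ∀ (x : Fin m → ℝ) (y : Fin n → ℝ),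
      2 * (∑ i, y i * g x y i) + (∑ i, ∑ k, (h x y i k) ^ 2)
        ≤ -γ₁ * (∑ i, (y i) ^ 2) + C * ((∑ j, (x j) ^ 2) ^ (η₃ / 2) + 1))
    -- the strong dissipativity condition `(H7)`
    (hstrong : ∀ (x : Fin m → ℝ) (y₁ y₂ : Fin n → ℝ),
      2 * (∑ i, (y₁ i - y₂ i) * (g x y₁ i - g x y₂ i))
          + (∑ i, ∑ k, (h x y₁ i k - h x y₂ i k) ^ 2)
        ≤ -γ₂ * (∑ i, (y₁ i - y₂ i) ^ 2))
    -- solutions of the frozen SDE, driven by the same Brownian motion: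
    -- the pair process solves the associated (degenerate) martingale problem
    (Y : (Fin m → ℝ) → (Fin n → ℝ) → ℝ → Ω → (Fin n → ℝ))
    (hY0 : ∀ x y ω, Y x y 0 ω = y)
    (hYcont : ∀ x y ω, Continuous fun t => Y x y t ω)
    (hYadapted : ∀ x y, Adapted F (Y x y))
    (hpair : ∀ (x : Fin m → ℝ) (y₁ y₂ : Fin n → ℝ)
        (φ : ((Fin n → ℝ) × (Fin n → ℝ)) → ℝ), ContDiff ℝ 2 φ →
      IsLocalMartingale F ℙ (fun t ω =>
        φ (Y x y₁ t ω, Y x y₂ t ω) - φ (y₁, y₂)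
          - ∫ s in (0:ℝ)..t,
              frozenPairGenerator m n e g h x φ (Y x y₁ s ω, Y x y₂ s ω))) :
    ∀ (t : ℝ), 0 ≤ t → ∀ (x : Fin m → ℝ) (y₁ y₂ : Fin n → ℝ),
      (∫ ω, (∑ i, (Y x y₁ t ω i - Y x y₂ t ω i) ^ 2) ∂ℙ)
        ≤ Real.exp (-(γ₂ * t)) * (∑ i, (y₁ i - y₂ i) ^ 2) :=
  frozen_sde_contraction_general ℙ F m n e γ₂ hγ₂ g h hg hh hstrong Y hY0 hYcont hYadapted hpair
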